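/- arXiv:2505.11816 — 2 statements merged into one kernel-verified Lean document; each statement's English description precedes it below -/
import Mathlib

section
/- (Frequent Directions invariant, single step) Let S ∈ ℝ^{m×r} and Q ∈ ℝ^{m×r}, and let U' Σ' V'ᵀ be the SVD of the concatenated matrix [S, Q] ∈ ℝ^{m×2r}. Define σ = (σ'_r)², the square of the r-th singular value of [S, Q], and S⁺ = U'[:,:r] · sqrt(Σ'[:r]² − σ I_r). Then the matrix S Sᵀ + Q Qᵀ − S⁺ (S⁺)ᵀ is positive semidefinite, and ‖S Sᵀ + Q Qᵀ − S⁺ (S⁺)ᵀ‖₂ ≤ σ. -/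
/-!
Write `σ = s (r - 1) ^ 2`. Since `[S, Q] [S, Q]ᵀ = S Sᵀ + Q Qᵀ` and
`S⁺ S⁺ᵀ = U' diag(s j ^ 2 - σ for j < r, 0 otherwise) U'ᵀ`, the residual is
`U' diag(min (s i ^ 2) σ) U'ᵀ`; monotonicity of `s` is what makes the entries collapse to
this minimum. Conjugation by the orthogonal `U'` preserves positive semidefiniteness and the
spectral norm, which for a diagonal matrix is the sup norm of its diagonal, here at most `σ`.
-/

open Matrix

/-- Spectral norm of a real matrix. -/
noncomputable def spec {m n : ℕ} (A : Matrix (Fin m) (Fin n) ℝ) : ℝ :=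
  ‖LinearMap.toContinuousLinearMap (Matrix.toEuclideanLin A)‖

namespace Matrix

theorem submatrix_mul_diagonal_mul_transpose_self {m ι κ R : Type*} [Fintype ι] [Fintype κ]
    [DecidableEq ι] [DecidableEq κ] [CommSemiring R] (A : Matrix m κ R) {e : ι → κ}
    (he : Function.Injective e) (c : ι → R) (d : κ → R) (hde : ∀ a, d (e a) = c a * c a)
    (hd : ∀ k ∉ Set.range e, d k = 0) :
    A.submatrix id e * diagonal c * (A.submatrix id e * diagonal c)ᵀ = A * diagonal d * Aᵀ := by
  ext i j
  simp only [mul_apply, transpose_apply, submatrix_apply, id_eq, diagonal_apply, mul_ite,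
    mul_zero, Finset.sum_ite_eq', Finset.mem_univ, if_true]
  refine Fintype.sum_of_injective e he _ _ (fun k hk => by simp [hd k hk]) fun a => ?_
  rw [hde]
  ring

variable {n : Type*} [Fintype n] [DecidableEq n]

theorem posSemidef_mul_diagonal_mul_transpose (U : Matrix n n ℝ) {d : n → ℝ} (hd : 0 ≤ d) :
    (U * diagonal d * Uᵀ).PosSemidef :=
  (posSemidef_diagonal_iff.2 hd).mul_mul_conjTranspose_same U

open scoped Matrix.Norms.L2Operator

theorem l2_opNorm_mul_diagonal_mul_transpose {U : Matrix n n ℝ}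
    (hU : U ∈ orthogonalGroup n ℝ) (d : n → ℝ) : ‖U * diagonal d * Uᵀ‖ = ‖d‖ := by
  have hUt : Uᵀ = star U := rfl
  rw [hUt, CStarRing.norm_mul_mem_unitary _ (Unitary.star_mem hU),
    CStarRing.norm_mem_unitary_mul _ hU, l2_opNorm_diagonal]

end Matrix

theorem spec_mul_diagonal_mul_transpose {m : ℕ} {U : Matrix (Fin m) (Fin m) ℝ}
    (hU : U ∈ orthogonalGroup (Fin m) ℝ) (d : Fin m → ℝ) : spec (U * diagonal d * Uᵀ) = ‖d‖ :=
  open scoped Matrix.Norms.L2Operator in l2_opNorm_mul_diagonal_mul_transpose hU d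

theorem fd_single_step_general
    (m r : ℕ) (hrm : r ≤ m)
    (S Q : Matrix (Fin m) (Fin r) ℝ)
    (U' : Matrix (Fin m) (Fin m) ℝ) (s : ℕ → ℝ)
    (hU' : U'ᵀ * U' = 1)
    (hdesc : ∀ i j : ℕ, i ≤ j → s j ≤ s i)
    (hnn : ∀ i : ℕ, 0 ≤ s i)
    (hB : Matrix.fromCols S Q * (Matrix.fromCols S Q)ᵀ
        = U' * Matrix.diagonal (fun i : Fin m => (s i) ^ 2) * U'ᵀ)
    (Splus : Matrix (Fin m) (Fin r) ℝ)
    (hSplus : Splus = Matrix.of fun (i : Fin m) (j : Fin r) =>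
        U' i ⟨j, lt_of_lt_of_le j.isLt hrm⟩
          * Real.sqrt ((s j) ^ 2 - (s (r - 1)) ^ 2)) :
    (S * Sᵀ + Q * Qᵀ - Splus * Splusᵀ).PosSemidef ∧
      spec (S * Sᵀ + Q * Qᵀ - Splus * Splusᵀ) ≤ (s (r - 1)) ^ 2 := by
  set σ := s (r - 1) ^ 2
  have hsq_anti (i j : ℕ) (h : i ≤ j) : s j ^ 2 ≤ s i ^ 2 :=
    pow_le_pow_left₀ (hnn j) (hdesc i j h) 2
  have hSplus_eq : Splus
      = U'.submatrix id (Fin.castLE hrm) * diagonal fun j : Fin r => Real.sqrt (s j ^ 2 - σ) := by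
    subst hSplus
    ext i j
    simp only [of_apply, mul_diagonal, submatrix_apply, id_eq]
    rfl
  have hSplus_sq : Splus * Splusᵀ
      = U' * diagonal (fun k : Fin m => s k ^ 2 - min (s k ^ 2) σ) * U'ᵀ := by
    rw [hSplus_eq]
    refine submatrix_mul_diagonal_mul_transpose_self U' (Fin.castLE_injective hrm) _ _
      (fun j => ?_) fun k hk => ?_
    · have hσj : σ ≤ s j ^ 2 := hsq_anti j (r - 1) (by omega)
      simp [min_eq_right hσj, Real.mul_self_sqrt (sub_nonneg.2 hσj)]
    · have hrk : r ≤ k := by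
        by_contra! h
        exact hk ⟨⟨k, h⟩, rfl⟩
      have hkσ : s k ^ 2 ≤ σ := hsq_anti (r - 1) k (by omega)
      simp [min_eq_left hkσ]
  have hresidual : S * Sᵀ + Q * Qᵀ - Splus * Splusᵀ
      = U' * diagonal (fun k : Fin m => min (s k ^ 2) σ) * U'ᵀ := by
    rw [← fromCols_mul_fromRows, ← transpose_fromCols, hB, hSplus_sq, ← sub_mul, ← mul_sub,
      ← diagonal_sub]
    simp only [sub_sub_cancel]
  rw [hresidual, spec_mul_diagonal_mul_transpose ((mem_orthogonalGroup_iff' _ _).2 hU')]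
  refine ⟨posSemidef_mul_diagonal_mul_transpose U' fun k => by positivity,
    pi_norm_le_iff_of_nonneg (sq_nonneg _) |>.2 fun k => ?_⟩
  rw [Real.norm_eq_abs, abs_of_nonneg (by positivity)]
  exact min_le_right _ _

/-- One shrinkage step of Frequent Directions.  Let `U'` be the left singular
vectors of `[S, Q]`, with singular values `s 0 ≥ s 1 ≥ …` (so
`[S,Q] [S,Q]ᵀ = U' diag(s i ^ 2) U'ᵀ`), let `σ = s (r-1) ^ 2` be the square of
the `r`-th singular value, and `S⁺ = U'[:,:r] · sqrt(diag(s j ^ 2) − σ I)`.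
Then `S Sᵀ + Q Qᵀ − S⁺ (S⁺)ᵀ` is positive semidefinite and its spectral norm
is at most `σ`. -/
theorem fd_single_step
    (m r : ℕ) (hr : 0 < r) (hrm : r ≤ m)
    (S Q : Matrix (Fin m) (Fin r) ℝ)
    (U' : Matrix (Fin m) (Fin m) ℝ) (s : ℕ → ℝ)
    (hU' : U'ᵀ * U' = 1)
    (hdesc : ∀ i j : ℕ, i ≤ j → s j ≤ s i)
    (hnn : ∀ i : ℕ, 0 ≤ s i)
    (hB : Matrix.fromCols S Q * (Matrix.fromCols S Q)ᵀ
        = U' * Matrix.diagonal (fun i : Fin m => (s i) ^ 2) * U'ᵀ)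
    (Splus : Matrix (Fin m) (Fin r) ℝ)
    (hSplus : Splus = Matrix.of fun (i : Fin m) (j : Fin r) =>
        U' i ⟨j, lt_of_lt_of_le j.isLt hrm⟩
          * Real.sqrt ((s j) ^ 2 - (s (r - 1)) ^ 2)) :
    (S * Sᵀ + Q * Qᵀ - Splus * Splusᵀ).PosSemidef ∧
      spec (S * Sᵀ + Q * Qᵀ - Splus * Splusᵀ) ≤ (s (r - 1)) ^ 2 :=
  fd_single_step_general m r hrm S Q U' s hU' hdesc hnn hB Splus hSplus
end

section
/- Suppose S, Q ∈ ℝ^{m×r} and let S⁺ be the FD-updated sketch with shrinkage σ = σ_r([S,Q])². Then S⁺ (S⁺)ᵀ ⪯ S Sᵀ + Q Qᵀ (the updated sketch covariance never overestimates the accumulated covariance), and consequently, by induction over a stream Q₁,…,Q_T, the final FD sketch satisfies S_T S_Tᵀ ⪯ Σ_{t=1}^T Q_t Q_tᵀ in the Loewner order. -/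
open Matrix

/-!
Write `B = [S, Q] = U' Σ' V'ᵀ`, so `S Sᵀ + Q Qᵀ = B Bᵀ = U' diag(σ'ᵢ²) U'ᵀ`. The update keeps the
first `r` left singular vectors with squared weights `(√(σ'ⱼ² − σ))² = max(σ'ⱼ² − σ, 0)`, so
`S⁺ S⁺ᵀ = U' diag(max(σ'ⱼ² − σ, 0)) U'ᵀ` (weight zero beyond `r`). The difference is
`U' diag(min(σ, σ'ᵢ²)) U'ᵀ`, positive semidefinite because `σ ≥ 0`. Summing the one-step
inequalities along the stream telescopes to the final bound.
-/

namespace Matrix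

variable {m n p R : Type*} [Fintype n] [Fintype p]

theorem fromCols_mul_transpose_fromCols [Semiring R] (A : Matrix m n R) (B : Matrix m p R) :
    fromCols A B * (fromCols A B)ᵀ = A * Aᵀ + B * Bᵀ := by
  rw [transpose_fromCols, fromCols_mul_fromRows]

theorem posSemidef_mul_diagonal_mul_transpose_s16 [Finite m] [DecidableEq n] [CommRing R]
    [PartialOrder R] [StarRing R] [StarOrderedRing R] [TrivialStar R]
    (U : Matrix m n R) {d : n → R} (hd : ∀ i, 0 ≤ d i) :
    (U * diagonal d * Uᵀ).PosSemidef := by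
  simpa only [conjTranspose_eq_transpose_of_trivial] using
    (posSemidef_diagonal_iff.2 hd).mul_mul_conjTranspose_same U

theorem of_scaled_cols_mul_transpose [DecidableEq n] [CommSemiring R]
    (U : Matrix m n R) {e : p → n} (he : e.Injective) (f : p → R) :
    (of fun i j => U i (e j) * f j) * (of fun i j => U i (e j) * f j)ᵀ
      = U * diagonal (Function.extend e (f ^ 2) 0) * Uᵀ := by
  ext i k
  rw [mul_apply, mul_apply]
  simp only [mul_diagonal, transpose_apply, of_apply]
  refine Fintype.sum_of_injective e he _ _ (fun x hx => ?_) (fun j => ?_)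
  · rw [Function.extend_apply' _ _ _ (by simpa using hx)]
    simp
  · rw [he.extend_apply]
    simp only [Pi.pow_apply]
    ring

theorem posSemidef_sub_shrunk_cols [Finite m] [DecidableEq n] (U : Matrix m n ℝ)
    {e : p → n} (he : e.Injective) (lam : n → ℝ) (hlam : ∀ i, 0 ≤ lam i) {σ : ℝ} (hσ : 0 ≤ σ) :
    (U * diagonal lam * Uᵀ - (of fun i j => U i (e j) * √(lam (e j) - σ))
      * (of fun i j => U i (e j) * √(lam (e j) - σ))ᵀ).PosSemidef := by
  rw [of_scaled_cols_mul_transpose U he, ← Matrix.sub_mul, ← Matrix.mul_sub, diagonal_sub]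
  refine posSemidef_mul_diagonal_mul_transpose_s16 U fun i => ?_
  by_cases hi : ∃ j, e j = i
  · obtain ⟨j, rfl⟩ := hi
    rw [he.extend_apply, Pi.pow_apply, Real.sq_sqrt']
    simp only [sub_nonneg, max_le_iff]
    exact ⟨by linarith, hlam _⟩
  · rw [Function.extend_apply' _ _ _ hi, Pi.zero_apply, sub_zero]
    exact hlam i

end Matrix

theorem posSemidef_sum_Icc_sub_of_steps {n R : Type*} [Ring R] [PartialOrder R] [StarRing R]
    [AddLeftMono R] (P C : ℕ → Matrix n n R)
    {T : ℕ} (h₁ : (C 1 - P 1).PosSemidef)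
    (hstep : ∀ t, 2 ≤ t → t ≤ T → (P (t - 1) + C t - P t).PosSemidef) :
    ∀ t, 1 ≤ t → t ≤ T → ((∑ u ∈ Finset.Icc 1 t, C u) - P t).PosSemidef := by
  intro t ht
  induction t, ht using Nat.le_induction with
  | base => exact fun _ => by simpa using h₁
  | succ t ht ih =>
    intro htT
    have hsplit : (∑ u ∈ Finset.Icc 1 (t + 1), C u) - P (t + 1)
        = ((∑ u ∈ Finset.Icc 1 t, C u) - P t) + (P (t + 1 - 1) + C (t + 1) - P (t + 1)) := by
      rw [Finset.sum_Icc_succ_top (by omega), Nat.add_sub_cancel]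
      abel
    rw [hsplit]
    exact (ih (by omega)).add (hstep (t + 1) (by omega) htT)

theorem fd_loewner_underestimate_general
    (m r T : ℕ) (hrm : r ≤ m) (hT : 1 ≤ T)
    (S Q : ℕ → Matrix (Fin m) (Fin r) ℝ)
    (U : ℕ → Matrix (Fin m) (Fin m) ℝ) (s : ℕ → ℕ → ℝ)
    (hS1 : S 1 = Q 1)
    (hB : ∀ t, 2 ≤ t → t ≤ T →
      Matrix.fromCols (S (t - 1)) (Q t)
          * (Matrix.fromCols (S (t - 1)) (Q t))ᵀ
        = U t * Matrix.diagonal (fun i : Fin m => (s t i) ^ 2) * (U t)ᵀ)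
    (hSdef : ∀ t, 2 ≤ t → t ≤ T →
      S t = Matrix.of fun (i : Fin m) (j : Fin r) =>
        U t i ⟨j, lt_of_lt_of_le j.isLt hrm⟩
          * Real.sqrt ((s t j) ^ 2 - (s t (r - 1)) ^ 2)) :
    (∀ t, 2 ≤ t → t ≤ T →
      (S (t - 1) * (S (t - 1))ᵀ + Q t * (Q t)ᵀ - S t * (S t)ᵀ).PosSemidef) ∧
    ((∑ t ∈ Finset.Icc 1 T, Q t * (Q t)ᵀ) - S T * (S T)ᵀ).PosSemidef := by
  have step : ∀ t, 2 ≤ t → t ≤ T →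
      (S (t - 1) * (S (t - 1))ᵀ + Q t * (Q t)ᵀ - S t * (S t)ᵀ).PosSemidef := by
    intro t ht htT
    rw [← fromCols_mul_transpose_fromCols, hB t ht htT, hSdef t ht htT]
    exact posSemidef_sub_shrunk_cols (U t) (Fin.castLE_injective hrm) (fun i => s t i ^ 2)
      (fun i => sq_nonneg _) (sq_nonneg _)
  refine ⟨step, posSemidef_sum_Icc_sub_of_steps (fun t => S t * (S t)ᵀ) (fun t => Q t * (Q t)ᵀ)
    (by simpa [hS1] using PosSemidef.zero) step T hT le_rfl⟩

/-- FD shrinkage invariant.  With the Frequent Directions update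
`S 1 = Q 1` and for `t ≥ 2`:  `[S (t-1), Q t] = U' Σ' V'ᵀ` (encoded via
`[S (t-1), Q t][S (t-1), Q t]ᵀ = U'_t diag((s t i)²) (U'_t)ᵀ` with descending
nonnegative `s t`), `σ_t = (s t (r-1))²`, and
`S t = U'_t[:,:r] sqrt(diag((s t j)²) − σ_t I)`:
each step never overestimates, `S t (S t)ᵀ ⪯ S (t-1) (S (t-1))ᵀ + Q t (Q t)ᵀ`,
and consequently the final sketch satisfies
`S T (S T)ᵀ ⪯ Σ_{t=1}^T Q t (Q t)ᵀ` in the Loewner order. -/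
theorem fd_loewner_underestimate
    (m r T : ℕ) (hr : 0 < r) (hrm : r ≤ m) (hT : 1 ≤ T)
    (S Q : ℕ → Matrix (Fin m) (Fin r) ℝ)
    (U : ℕ → Matrix (Fin m) (Fin m) ℝ) (s : ℕ → ℕ → ℝ)
    (hS1 : S 1 = Q 1)
    (hU : ∀ t, 2 ≤ t → t ≤ T → (U t)ᵀ * U t = 1)
    (hdesc : ∀ t, 2 ≤ t → t ≤ T → ∀ i j : ℕ, i ≤ j → s t j ≤ s t i)
    (hnn : ∀ t, 2 ≤ t → t ≤ T → ∀ i : ℕ, 0 ≤ s t i)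
    (hB : ∀ t, 2 ≤ t → t ≤ T →
      Matrix.fromCols (S (t - 1)) (Q t)
          * (Matrix.fromCols (S (t - 1)) (Q t))ᵀ
        = U t * Matrix.diagonal (fun i : Fin m => (s t i) ^ 2) * (U t)ᵀ)
    (hSdef : ∀ t, 2 ≤ t → t ≤ T →
      S t = Matrix.of fun (i : Fin m) (j : Fin r) =>
        U t i ⟨j, lt_of_lt_of_le j.isLt hrm⟩
          * Real.sqrt ((s t j) ^ 2 - (s t (r - 1)) ^ 2)) :
    (∀ t, 2 ≤ t → t ≤ T →
      (S (t - 1) * (S (t - 1))ᵀ + Q t * (Q t)ᵀ - S t * (S t)ᵀ).PosSemidef) ∧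
    ((∑ t ∈ Finset.Icc 1 T, Q t * (Q t)ᵀ) - S T * (S T)ᵀ).PosSemidef :=
  fd_loewner_underestimate_general m r T hrm hT S Q U s hS1 hB hSdef
end
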